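/- arXiv:2202.08126 — 4 statements merged into one kernel-verified Lean document; each statement's English description precedes it below -/
import Mathlib

section
/- Let B ∈ F_2[x] be a perfect polynomial and Q an irreducible divisor of B with Q ∉ {x, x+1}. Then either 1 + Q divides B, or there exists h ≥ 1 such that σ(Q^{2h}) divides B. -/
open Polynomial Finset

/-- The sum of all monic divisors of a binary polynomial. -/
noncomputable def sigma2 (A : (ZMod 2)[X]) : (ZMod 2)[X] :=
  ∑ᶠ d ∈ {d : (ZMod 2)[X] | d.Monic ∧ d ∣ A}, d

/-!
Write `B = Q ^ k * C` with `Q ∤ C` and `k ≥ 1`. The monic divisors of `B` are exactly the products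
`Q ^ i * e` with `i ≤ k` and `e` a monic divisor of `C`, so `σ(B) = σ(Q ^ k) σ(C)` and `σ(Q ^ k)`
divides `σ(B) = B`. For even `k` this is the second alternative; for odd `k`,
`σ(Q ^ k) = (1 + Q)(1 + Q ^ 2 + ⋯ + Q ^ (k - 1))`.
-/

section PrimePowers

variable {M : Type*} [CommMonoidWithZero M] [IsCancelMulZero M] {p a b : M}

theorem Prime.eq_and_eq_of_pow_mul_eq_pow_mul (hp : Prime p) (ha : ¬p ∣ a) (hb : ¬p ∣ b)
    {i j : ℕ} (h : p ^ i * a = p ^ j * b) : i = j ∧ a = b := by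
  have hmult : ∀ (n : ℕ) (c : M), ¬p ∣ c → emultiplicity p (p ^ n * c) = n := fun n c hc => by
    rw [emultiplicity_mul hp, emultiplicity_pow_self_of_prime hp, emultiplicity_eq_zero.mpr hc,
      add_zero]
  have hij : i = j := by exact_mod_cast (hmult i a ha).symm.trans (h ▸ hmult j b hb)
  subst hij
  exact ⟨rfl, mul_left_cancel₀ (pow_ne_zero i hp.ne_zero) h⟩

theorem Prime.exists_eq_pow_mul_of_dvd_pow_mul [DecompositionMonoid M] (hp : Prime p) {k : ℕ}
    {c d : M} (hd : d ∣ p ^ k * c) : ∃ j ≤ k, ∃ e, e ∣ c ∧ d = p ^ j * e := by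
  obtain ⟨d₁, d₂, hd₁, hd₂, rfl⟩ := exists_dvd_and_dvd_of_dvd_mul hd
  obtain ⟨j, hjk, hassoc⟩ := (dvd_prime_pow hp k).mp hd₁
  obtain ⟨u, rfl⟩ := hassoc.symm
  exact ⟨j, hjk, u * d₂, Units.mul_left_dvd.mpr hd₂, mul_assoc _ _ _⟩

end PrimePowers

theorem one_add_dvd_geom_sum_two_mul {R : Type*} [CommSemiring R] (x : R) (n : ℕ) :
    1 + x ∣ ∑ i ∈ range (2 * n), x ^ i := by
  suffices ∑ i ∈ range (2 * n), x ^ i = (1 + x) * ∑ j ∈ range n, x ^ (2 * j) from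
    Dvd.intro _ this.symm
  induction n with
  | zero => simp
  | succ n ih =>
    rw [mul_add_one, sum_range_succ, sum_range_succ, add_assoc, ih, sum_range_succ]
    ring

namespace Polynomial

variable {K : Type*} [Field K]

theorem finite_setOf_monic_dvd {A : K[X]} (hA : A ≠ 0) : {d : K[X] | d.Monic ∧ d ∣ A}.Finite :=
  @Set.toFinite _ _ (@Finite.of_fintype _ (fintypeSubtypeMonicDvd A hA))

theorem finsum_monic_dvd_prime_pow_mul {Q C : K[X]} (hQ : Prime Q) (hQm : Q.Monic) (hC : C ≠ 0)
    (hQC : ¬Q ∣ C) (k : ℕ) :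
    ∑ᶠ d ∈ {d : K[X] | d.Monic ∧ d ∣ Q ^ k * C}, d =
      (∑ i ∈ range (k + 1), Q ^ i) * ∑ᶠ d ∈ {d : K[X] | d.Monic ∧ d ∣ C}, d := by
  have hB : Q ^ k * C ≠ 0 := mul_ne_zero (pow_ne_zero k hQ.ne_zero) hC
  rw [finsum_mem_eq_finite_toFinset_sum _ (finite_setOf_monic_dvd hB),
    finsum_mem_eq_finite_toFinset_sum _ (finite_setOf_monic_dvd hC), sum_mul_sum, ← sum_product']
  symm
  refine sum_nbij (fun ie => Q ^ ie.1 * ie.2) ?_ ?_ ?_ (fun _ _ => rfl)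
  · rintro ⟨i, e⟩ hie
    simp only [mem_product, mem_range, Set.Finite.mem_toFinset, Set.mem_ofPred_eq] at hie ⊢
    exact ⟨(hQm.pow i).mul hie.2.1, mul_dvd_mul (pow_dvd_pow Q (by omega)) hie.2.2⟩
  · rintro ⟨i, e⟩ hie ⟨j, e'⟩ hje h
    simp only [coe_product, Set.mem_prod, Set.Finite.coe_toFinset, Set.mem_ofPred_eq] at hie hje
    obtain ⟨rfl, rfl⟩ := hQ.eq_and_eq_of_pow_mul_eq_pow_mul (fun h => hQC (h.trans hie.2.2))
      (fun h => hQC (h.trans hje.2.2)) h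
    rfl
  · intro d hd
    simp only [Set.Finite.coe_toFinset, Set.mem_ofPred_eq] at hd
    obtain ⟨j, hjk, e, he, rfl⟩ := hQ.exists_eq_pow_mul_of_dvd_pow_mul hd.2
    refine ⟨(j, e), ?_, rfl⟩
    simp only [coe_product, Set.mem_prod, coe_range, Set.mem_Iio, Set.Finite.coe_toFinset,
      Set.mem_ofPred_eq]
    exact ⟨by omega, (hQm.pow j).of_mul_monic_left hd.1, he⟩

theorem monic_of_ne_zero_zmod_two {p : (ZMod 2)[X]} (hp : p ≠ 0) : p.Monic :=
  have two_units : ∀ a : ZMod 2, a ≠ 0 → a = 1 := by decide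
  two_units _ (leadingCoeff_ne_zero.mpr hp)

end Polynomial

theorem sigma2_prime_pow_mul {Q C : (ZMod 2)[X]} (hQ : Prime Q) (hC : C ≠ 0) (hQC : ¬Q ∣ C)
    (k : ℕ) : sigma2 (Q ^ k * C) = (∑ i ∈ range (k + 1), Q ^ i) * sigma2 C :=
  finsum_monic_dvd_prime_pow_mul hQ (monic_of_ne_zero_zmod_two hQ.ne_zero) hC hQC k

theorem odd_prime_divisor_of_perfect_general
    (B : (ZMod 2)[X]) (hB0 : B ≠ 0) (hperf : sigma2 B = B)
    (Q : (ZMod 2)[X]) (hQ : Irreducible Q) (hQB : Q ∣ B) :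
    (1 + Q) ∣ B ∨ ∃ h : ℕ, 1 ≤ h ∧ (∑ i ∈ Finset.range (2 * h + 1), Q ^ i) ∣ B := by
  have hk : multiplicity Q B ≠ 0 := multiplicity_ne_zero.mpr hQB
  obtain ⟨C, hBC, hQC⟩ :=
    (FiniteMultiplicity.of_prime_left hQ.prime hB0).exists_eq_pow_mul_and_not_dvd
  generalize multiplicity Q B = k at hk hBC
  have hC : C ≠ 0 := right_ne_zero_of_mul (hBC ▸ hB0)
  have hσ : (∑ i ∈ range (k + 1), Q ^ i) ∣ B := by
    rw [← hperf, hBC, sigma2_prime_pow_mul hQ.prime hC hQC]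
    exact dvd_mul_right _ _
  rcases Nat.even_or_odd' k with ⟨h, rfl | rfl⟩
  · exact Or.inr ⟨h, by omega, hσ⟩
  · refine Or.inl ((one_add_dvd_geom_sum_two_mul Q (h + 1)).trans ?_)
    rwa [show 2 * h + 1 + 1 = 2 * (h + 1) by ring] at hσ

theorem odd_prime_divisor_of_perfect
    (B : (ZMod 2)[X]) (hB0 : B ≠ 0) (hperf : sigma2 B = B)
    (Q : (ZMod 2)[X]) (hQ : Irreducible Q) (hQB : Q ∣ B)
    (hQx : Q ≠ X) (hQx1 : Q ≠ X + 1) :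
    (1 + Q) ∣ B ∨ ∃ h : ℕ, 1 ≤ h ∧ (∑ i ∈ Finset.range (2 * h + 1), Q ^ i) ∣ B :=
  odd_prime_divisor_of_perfect_general B hB0 hperf Q hQ hQB
end

section
/- Let M = 1 + x^a(x+1)^b ∈ F_2[x] be irreducible with a, b ≥ 1. Then for every h ≥ 1, σ(M^{2h}) = 1 + M + ⋯ + M^{2h} is squarefree and coprime to x(x+1). -/
open Polynomial Finset

theorem sigma_mersenne_even_squarefree (a b : ℕ) (ha : 1 ≤ a) (hb : 1 ≤ b)
    (M : (ZMod 2)[X]) (hM : M = 1 + X ^ a * (X + 1) ^ b) (hirr : Irreducible M)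
    (h : ℕ) (hh : 1 ≤ h) :
    Squarefree (∑ i ∈ Finset.range (2 * h + 1), M ^ i) ∧
    IsCoprime (∑ i ∈ Finset.range (2 * h + 1), M ^ i) (X * (X + 1)) := by
  set T : (ZMod 2)[X] := ∑ i ∈ Finset.range (2 * h + 1), M ^ i with hT
  set S : (ZMod 2)[X] := ∑ i ∈ Finset.range h, M ^ i with hS
  have two0 : (2 : (ZMod 2)[X]) = 0 := CharTwo.two_eq_zero
  -- evaluations
  have hM0 : M.eval 0 = 1 := by
    rw [hM]; simp [zero_pow (by omega : a ≠ 0)]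
  have hM1 : M.eval 1 = 1 := by
    rw [hM]
    simp [show (1 + 1 : ZMod 2) = 0 from rfl, zero_pow (by omega : b ≠ 0)]
  have hT0 : T.eval 0 = 1 := by
    rw [hT]
    simp [eval_finset_sum, hM0, Finset.sum_const, card_range, nsmul_eq_mul,
      Nat.cast_add, Nat.cast_mul, Nat.cast_ofNat,
      show ((2 : ℕ) : ZMod 2) = 0 from rfl]
    exact Or.inl rfl
  have hT1 : T.eval 1 = 1 := by
    rw [hT]
    simp [eval_finset_sum, hM1, Finset.sum_const, card_range, nsmul_eq_mul,
      Nat.cast_add, Nat.cast_mul, Nat.cast_ofNat,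
      show ((2 : ℕ) : ZMod 2) = 0 from rfl]
    exact Or.inl rfl
  have hX1 : (X + 1 : (ZMod 2)[X]) = X - C 1 := by
    rw [map_one, CharTwo.sub_eq_add]
  have hdvdX : ¬ (X : (ZMod 2)[X]) ∣ T := by
    rw [X_dvd_iff, coeff_zero_eq_eval_zero, hT0]
    exact one_ne_zero
  have hdvdX1 : ¬ (X + 1 : (ZMod 2)[X]) ∣ T := by
    rw [hX1, dvd_iff_isRoot]
    simp [IsRoot, hT1]
  have hcopX : IsCoprime T (X : (ZMod 2)[X]) :=
    (irreducible_X.coprime_iff_not_dvd.mpr hdvdX).symm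
  have hcopX1 : IsCoprime T (X + 1 : (ZMod 2)[X]) := by
    rw [hX1] at hdvdX1 ⊢
    exact ((irreducible_X_sub_C (1 : ZMod 2)).coprime_iff_not_dvd.mpr hdvdX1).symm
  have hMne : (M + 1 : (ZMod 2)[X]) ≠ 0 := by
    intro hcon
    have hM1' : M = 1 := by
      have := eq_neg_of_add_eq_zero_left hcon
      simpa [CharTwo.neg_eq] using this
    exact hirr.not_isUnit (hM1' ▸ isUnit_one)
  -- key identity
  have h1 : (M + 1) * T = M ^ (2 * h + 1) + 1 := by
    have := geom_sum_mul M (2 * h + 1)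
    rw [CharTwo.sub_eq_add, CharTwo.sub_eq_add] at this
    rw [mul_comm]; exact this
  have h2 : (M + 1) * S = M ^ h + 1 := by
    have := geom_sum_mul M h
    rw [CharTwo.sub_eq_add, CharTwo.sub_eq_add] at this
    rw [mul_comm]; exact this
  have key : T = (1 + M) * S ^ 2 + M ^ (2 * h) := by
    apply mul_left_cancel₀ hMne
    rw [h1]
    symm
    calc (M + 1) * ((1 + M) * S ^ 2 + M ^ (2 * h))
        = ((M + 1) * S) ^ 2 + (M + 1) * M ^ (2 * h) := by ring
      _ = (M ^ h + 1) ^ 2 + (M + 1) * M ^ (2 * h) := by rw [h2]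
      _ = (M ^ h) ^ 2 + 2 * M ^ h + 1 + (M ^ (2 * h) * M + M ^ (2 * h)) := by ring
      _ = M ^ (2 * h) + 1 + (M ^ (2 * h + 1) + M ^ (2 * h)) := by
          rw [two0, ← pow_mul, mul_comm h 2, pow_succ]; ring
      _ = M ^ (2 * h + 1) + 1 + 2 * M ^ (2 * h) := by ring
      _ = M ^ (2 * h + 1) + 1 := by rw [two0]; ring
  -- derivative
  have hT' : derivative T = derivative M * S ^ 2 := by
    rw [key]
    simp [derivative_pow, Nat.cast_mul, Nat.cast_ofNat,
      show ((2 : ℕ) : ZMod 2) = 0 from rfl, show ((2 : ZMod 2)) = 0 from rfl]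
  -- coprimality with M and with S^2
  have hcopM : IsCoprime T M := by
    refine ⟨1, ∑ i ∈ Finset.range (2 * h), M ^ i, ?_⟩
    rw [one_mul, hT, geom_sum_succ]
    linear_combination (M * (∑ i ∈ Finset.range (2 * h), M ^ i)) * two0
  have hcopM2h : IsCoprime T (M ^ (2 * h)) := hcopM.pow_right
  have hcopS2 : IsCoprime T ((1 + M) * S ^ 2) := by
    have heq : (1 + M) * S ^ 2 = M ^ (2 * h) + T * 1 := by
      linear_combination -key - M ^ (2 * h) * two0
    rw [heq]
    exact hcopM2h.add_mul_left_right 1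
  have hcopSS : IsCoprime T (S ^ 2) := hcopS2.of_mul_right_right
  -- derivative of M divides X^a * (X+1)^b
  have hM' : derivative M ∣ X ^ a * (X + 1) ^ b := by
    obtain ⟨a', rfl⟩ : ∃ a', a = a' + 1 := ⟨a - 1, by omega⟩
    obtain ⟨b', rfl⟩ : ∃ b', b = b' + 1 := ⟨b - 1, by omega⟩
    have hd : derivative M
        = C ((a' + 1 : ℕ) : ZMod 2) * X ^ a' * (X + 1) ^ (b' + 1)
          + X ^ (a' + 1) * (C ((b' + 1 : ℕ) : ZMod 2) * (X + 1) ^ b') := by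
      rw [hM]
      simp [derivative_pow, mul_comm, mul_assoc, mul_left_comm]
    rcases Nat.even_or_odd (a' + 1) with hae | hao
    · rcases Nat.even_or_odd (b' + 1) with hbe | hbo
      · -- both even: M is a square, contradiction with irreducibility
        exfalso
        obtain ⟨a₂, ha₂⟩ := hae
        obtain ⟨b₂, hb₂⟩ := hbe
        have hsq : M = (1 + X ^ a₂ * (X + 1) ^ b₂) * (1 + X ^ a₂ * (X + 1) ^ b₂) := by
          rw [hM, ha₂, hb₂, pow_add, pow_add]
          linear_combination (-(X ^ a₂ * (X + 1) ^ b₂)) * two0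
        rcases hirr.isUnit_or_isUnit hsq with hu | hu <;>
          exact hirr.not_isUnit (hsq ▸ (hu.mul hu))
      · -- a even, b odd
        have hca : ((a' + 1 : ℕ) : ZMod 2) = 0 := by
          rw [← ZMod.natCast_mod, Nat.even_iff.mp hae]; rfl
        have hcb : ((b' + 1 : ℕ) : ZMod 2) = 1 := by
          rw [← ZMod.natCast_mod, Nat.odd_iff.mp hbo]; rfl
        rw [hd, hca, hcb]
        simp only [map_zero, map_one, zero_mul, one_mul, zero_add]
        exact mul_dvd_mul dvd_rfl (pow_dvd_pow _ (by omega))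
    · rcases Nat.even_or_odd (b' + 1) with hbe | hbo
      · -- a odd, b even
        have hca : ((a' + 1 : ℕ) : ZMod 2) = 1 := by
          rw [← ZMod.natCast_mod, Nat.odd_iff.mp hao]; rfl
        have hcb : ((b' + 1 : ℕ) : ZMod 2) = 0 := by
          rw [← ZMod.natCast_mod, Nat.even_iff.mp hbe]; rfl
        rw [hd, hca, hcb]
        simp only [map_zero, map_one, zero_mul, one_mul, mul_zero, add_zero]
        exact mul_dvd_mul (pow_dvd_pow _ (by omega)) dvd_rfl
      · -- both odd
        have hca : ((a' + 1 : ℕ) : ZMod 2) = 1 := by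
          rw [← ZMod.natCast_mod, Nat.odd_iff.mp hao]; rfl
        have hcb : ((b' + 1 : ℕ) : ZMod 2) = 1 := by
          rw [← ZMod.natCast_mod, Nat.odd_iff.mp hbo]; rfl
        have : derivative M = X ^ a' * (X + 1) ^ b' := by
          rw [hd, hca, hcb]
          simp only [map_one, one_mul]
          calc X ^ a' * (X + 1) ^ (b' + 1) + X ^ (a' + 1) * (X + 1) ^ b'
              = X ^ a' * (X + 1) ^ b' * (2 * X + 1) := by ring
            _ = X ^ a' * (X + 1) ^ b' := by rw [two0]; ring
        rw [this]
        exact mul_dvd_mul (pow_dvd_pow _ (by omega)) (pow_dvd_pow _ (by omega))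
  have hcopMder : IsCoprime T (derivative M) :=
    IsCoprime.of_isCoprime_of_dvd_right (hcopX.pow_right.mul_right hcopX1.pow_right) hM'
  have hsep : T.Separable := by
    rw [Polynomial.separable_def, hT']
    exact hcopMder.mul_right hcopSS
  exact ⟨PerfectField.separable_iff_squarefree.mp hsep, hcopX.mul_right hcopX1⟩
end

section
/- Let S = 1 + x^a(x+1)^b(x^2+x+1)^c ∈ F_2[x] be irreducible with a, b, c ≥ 1 and gcd(a,b,c) = 1. Then for all h ≥ 1, σ(S^{2h}) is squarefree. -/
open Polynomial Finset

private lemma two0 : (2 : (ZMod 2)[X]) = 0 := by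
  have := CharP.cast_eq_zero (ZMod 2)[X] 2
  exact_mod_cast this

private lemma dQ : derivative (X^2+X+1 : (ZMod 2)[X]) = 1 := by
  simp only [derivative_add, derivative_one, derivative_X, derivative_X_pow,
    Nat.cast_ofNat, show ((2:ZMod 2)) = 0 by decide, map_zero, zero_mul, add_zero, zero_add]

private lemma zcast1 (k : ℕ) (h : k % 2 = 1) : ((k : ℕ) : ZMod 2) = 1 := by
  rw [← ZMod.natCast_mod, h, Nat.cast_one]

private lemma zcast0 (k : ℕ) (h : k % 2 = 0) : ((k : ℕ) : ZMod 2) = 0 := by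
  rw [← ZMod.natCast_mod, h, Nat.cast_zero]

private lemma geomsub {R : Type*} [CommRing R] (x : R) (n : ℕ) :
    (x - 1) ∣ (∑ i ∈ Finset.range n, x ^ i) - (n : R) := by
  induction n with
  | zero => simp
  | succ n ih =>
    have h1 := sub_dvd_pow_sub_pow x 1 n
    rw [one_pow] at h1
    have key : (∑ i ∈ Finset.range (n+1), x ^ i) - ((n+1 : ℕ) : R)
        = ((∑ i ∈ Finset.range n, x ^ i) - (n : R)) + (x ^ n - 1) := by
      rw [Finset.sum_range_succ]; push_cast; ring
    rw [key]
    exact dvd_add ih h1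

private lemma sumid1 {R : Type*} [CommRing R] (x : R) (n : ℕ) :
    ∑ i ∈ Finset.range (n+1), x ^ i = 1 + x * ∑ i ∈ Finset.range n, x ^ i := by
  rw [Finset.sum_range_succ', pow_zero, Finset.mul_sum]
  rw [add_comm]
  congr 1
  exact Finset.sum_congr rfl fun i _ => by ring

private lemma sumid2 {R : Type*} [CommRing R] (x : R) (k : ℕ) :
    ∑ i ∈ Finset.range (2*k+1), x ^ i
      = (1 + x) * (∑ j ∈ Finset.range k, x ^ (2*j)) + x ^ (2*k) := by
  induction k with
  | zero => simp
  | succ k ih =>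
    rw [show 2*(k+1)+1 = (2*k+1)+1+1 by ring, Finset.sum_range_succ, Finset.sum_range_succ,
      ih, Finset.sum_range_succ]
    ring

private lemma derivT (S : (ZMod 2)[X]) (k : ℕ) :
    derivative (∑ i ∈ Finset.range (2*k+1), S ^ i)
      = derivative S * ∑ j ∈ Finset.range k, S ^ (2*j) := by
  induction k with
  | zero => simp
  | succ k ih =>
    rw [show 2*(k+1)+1 = (2*k+1)+1+1 by ring, Finset.sum_range_succ, Finset.sum_range_succ,
      derivative_add, derivative_add, ih, derivative_pow, derivative_pow,
      zcast1 (2*k+1) (by omega), zcast0 (2*k+1+1) (by omega), map_one, map_zero,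
      Finset.sum_range_succ]
    simp only [Nat.add_sub_cancel]
    ring

theorem sigma_s_even_squarefree (a b c : ℕ) (ha : 1 ≤ a) (hb : 1 ≤ b) (hc : 1 ≤ c)
    (hgcd : Nat.gcd (Nat.gcd a b) c = 1)
    (S : (ZMod 2)[X]) (hS : S = 1 + X ^ a * (X + 1) ^ b * (X ^ 2 + X + 1) ^ c)
    (hirr : Irreducible S) (h : ℕ) (hh : 1 ≤ h) :
    Squarefree (∑ i ∈ Finset.range (2 * h + 1), S ^ i) := by
  obtain ⟨a', rfl⟩ : ∃ a', a = a'+1 := ⟨a-1, by omega⟩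
  obtain ⟨b', rfl⟩ : ∃ b', b = b'+1 := ⟨b-1, by omega⟩
  obtain ⟨c', rfl⟩ : ∃ c', c = c'+1 := ⟨c-1, by omega⟩
  set q : (ZMod 2)[X] := X^2+X+1 with hq
  set P : (ZMod 2)[X] := X ^ (a'+1) * (X+1) ^ (b'+1) * q ^ (c'+1) with hP
  set T : (ZMod 2)[X] := ∑ i ∈ Finset.range (2*h+1), S ^ i with hT
  -- basic divisibilities of P
  have hPX : (X : (ZMod 2)[X]) ∣ P :=
    dvd_mul_of_dvd_left (dvd_mul_of_dvd_left (dvd_pow_self X (Nat.succ_ne_zero a')) _) _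
  have hPX1 : (X + 1 : (ZMod 2)[X]) ∣ P :=
    dvd_mul_of_dvd_left (dvd_mul_of_dvd_right (dvd_pow_self (X+1) (Nat.succ_ne_zero b')) _) _
  have hPq : q ∣ P := dvd_mul_of_dvd_right (dvd_pow_self q (Nat.succ_ne_zero c')) _
  have hSP : S - 1 = P := by rw [hS]; ring
  -- T - 1 is divisible by S - 1 = P
  have hcast : ((2*h+1 : ℕ) : (ZMod 2)[X]) = 1 := by
    rw [← Polynomial.C_eq_natCast, zcast1 (2*h+1) (by omega), map_one]
  have hT1 : P ∣ T - 1 := by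
    have := geomsub S (2*h+1)
    rwa [hcast, hSP] at this
  -- T ≠ 0
  have hPnu : ¬ IsUnit P := fun hu => Polynomial.not_isUnit_X (isUnit_of_dvd_unit hPX hu)
  have hTne : T ≠ 0 := by
    intro h0
    rw [h0] at hT1
    exact hPnu (isUnit_of_dvd_one (by simpa using hT1.neg_right))
  -- reduce to coprimality
  apply Polynomial.Separable.squarefree
  rw [Polynomial.separable_def, ← EuclideanDomain.gcd_isUnit_iff]
  by_contra hng
  have hg0 : EuclideanDomain.gcd T (derivative T) ≠ 0 := by
    intro h0
    exact hTne (EuclideanDomain.gcd_eq_zero_iff.mp h0).1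
  obtain ⟨D, hDirr, hDg⟩ := WfDvdMonoid.exists_irreducible_factor hng hg0
  have hDT : D ∣ T := hDg.trans (EuclideanDomain.gcd_dvd_left _ _)
  have hDT' : D ∣ derivative T := hDg.trans (EuclideanDomain.gcd_dvd_right _ _)
  have hDp : Prime D := UniqueFactorizationMonoid.irreducible_iff_prime.mp hDirr
  -- D dividing P gives a contradiction
  have hDnP : ¬ D ∣ P := by
    intro hd
    have h1 : D ∣ T - 1 := hd.trans hT1
    have : D ∣ 1 := by
      have := dvd_sub hDT h1
      simpa using this
    exact hDirr.not_isUnit (isUnit_of_dvd_one this)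
  -- derivative of S
  have hdS : derivative S = derivative P := by rw [hS]; simp
  have hdT : derivative T = derivative P * ∑ j ∈ Finset.range h, S ^ (2*j) := by
    rw [hT, derivT, hdS]
  rw [hdT] at hDT'
  rcases hDp.dvd_mul.mp hDT' with hDdP | hDU
  · -- D divides derivative P; show derivative P divides a product of X, X+1, q powers
    have hdPf : derivative P
        = X ^ a' * (X+1) ^ b' * q ^ c'
          * (C ((a'+1 : ℕ) : ZMod 2) * ((X+1)*q) + C ((b'+1 : ℕ) : ZMod 2) * (X*q)
             + C ((c'+1 : ℕ) : ZMod 2) * (X*(X+1))) := by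
      rw [hP, hq]
      simp only [derivative_mul, derivative_pow, derivative_X, derivative_add,
        derivative_one, dQ, Nat.add_sub_cancel, mul_one, zero_add, add_zero,
        Nat.cast_ofNat, show (2:ZMod 2) = 0 by decide, map_zero, mul_zero, zero_mul]
      ring
    have hnotall : ¬ ((a'+1) % 2 = 0 ∧ (b'+1) % 2 = 0 ∧ (c'+1) % 2 = 0) := by
      rintro ⟨h1, h2, h3⟩
      have : 2 ∣ Nat.gcd (Nat.gcd (a'+1) (b'+1)) (c'+1) :=
        Nat.dvd_gcd (Nat.dvd_gcd (by omega) (by omega)) (by omega)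
      omega
    have hR : (C ((a'+1 : ℕ) : ZMod 2) * ((X+1)*q) + C ((b'+1 : ℕ) : ZMod 2) * (X*q)
             + C ((c'+1 : ℕ) : ZMod 2) * (X*(X+1))) ∣ X^3 * (X+1)^3 * q^3 := by
      have two := two0
      rcases Nat.mod_two_eq_zero_or_one (a'+1) with hA | hA <;>
        rcases Nat.mod_two_eq_zero_or_one (b'+1) with hB | hB <;>
          rcases Nat.mod_two_eq_zero_or_one (c'+1) with hC | hC
      · exact absurd ⟨hA, hB, hC⟩ hnotall
      · rw [zcast0 _ hA, zcast0 _ hB, zcast1 _ hC, map_zero, map_one]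
        exact ⟨X^2*(X+1)^2*q^3, by ring⟩
      · rw [zcast0 _ hA, zcast1 _ hB, zcast0 _ hC, map_zero, map_one]
        exact ⟨X^2*(X+1)^3*q^2, by ring⟩
      · rw [zcast0 _ hA, zcast1 _ hB, zcast1 _ hC, map_zero, map_one]
        exact ⟨(X+1)^3*q^3, by linear_combination (-((X^2+X)*(X+1)^3*q^3)) * two⟩
      · rw [zcast1 _ hA, zcast0 _ hB, zcast0 _ hC, map_zero, map_one]
        exact ⟨X^3*(X+1)^2*q^2, by ring⟩
      · rw [zcast1 _ hA, zcast0 _ hB, zcast1 _ hC, map_zero, map_one]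
        exact ⟨X^3*q^3, by ring⟩
      · rw [zcast1 _ hA, zcast1 _ hB, zcast0 _ hC, map_zero, map_one]
        exact ⟨X^3*(X+1)^3*q^2, by linear_combination (-(X^4*(X+1)^3*q^3)) * two⟩
      · rw [zcast1 _ hA, zcast1 _ hB, zcast1 _ hC, map_one]
        exact ⟨X^3*(X+1)^3*q^3,
          by linear_combination (-((X^3+2*X^2+2*X)*(X^3*(X+1)^3*q^3))) * two⟩
    have hbig : derivative P ∣ X^(a'+3) * (X+1)^(b'+3) * q^(c'+3) := by
      rw [hdPf]
      calc X ^ a' * (X+1) ^ b' * q ^ c' * _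
          ∣ (X ^ a' * (X+1) ^ b' * q ^ c') * (X^3 * (X+1)^3 * q^3) :=
            mul_dvd_mul_left _ hR
        _ = X^(a'+3) * (X+1)^(b'+3) * q^(c'+3) := by ring
    have hDbig := hDdP.trans hbig
    have : D ∣ P := by
      rcases hDp.dvd_mul.mp hDbig with h1 | h1
      · rcases hDp.dvd_mul.mp h1 with h2 | h2
        · exact (hDp.dvd_of_dvd_pow h2).trans hPX
        · exact (hDp.dvd_of_dvd_pow h2).trans hPX1
      · exact (hDp.dvd_of_dvd_pow h1).trans hPq
    exact hDnP this
  · -- D divides the even geometric sum; conclude D ∣ S, then S ∣ 1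
    have hTid := sumid2 S h
    have hDspow : D ∣ S ^ (2*h) := by
      have heq : S ^ (2*h) = T - (1+S) * ∑ j ∈ Finset.range h, S ^ (2*j) := by
        rw [hT, hTid]; ring
      rw [heq]
      exact dvd_sub hDT (hDU.mul_left _)
    have hDS : D ∣ S := hDp.dvd_of_dvd_pow hDspow
    have hassoc : Associated D S := hDirr.associated_of_dvd hirr hDS
    have hST : S ∣ T := hassoc.symm.dvd.trans hDT
    have hSTm1 : S ∣ T - 1 := by
      have : T - 1 = S * ∑ i ∈ Finset.range (2*h), S ^ i := by
        rw [hT, sumid1]; ring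
      rw [this]
      exact Dvd.intro _ rfl
    have : S ∣ 1 := by
      have := dvd_sub hST hSTm1
      simpa using this
    exact hirr.not_isUnit (isUnit_of_dvd_one this)
end

section
/- For every n ≥ 1, the polynomial x^{2^n − 1}(x+1)^{2^n − 1} ∈ F_2[x] is perfect, i.e., equals the sum of its monic divisors. -/
open Polynomial

/-!
The monic divisors of `X ^ m * (X + 1) ^ m` are the products `X ^ i * (X + 1) ^ j` with
`i, j ≤ m`, so their sum factors as `(∑ i ≤ m, X ^ i) * (∑ j ≤ m, (X + 1) ^ j)`. For
`m = 2 ^ n - 1`, Frobenius turns each geometric sum `∑ i < 2 ^ n, x ^ i` into `(x + 1) ^ m`;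
since `(X + 1) + 1 = X`, the two factors swap into `(X + 1) ^ m * X ^ m`.
-/

open Finset

theorem geom_sum_two_pow_eq_add_one_pow {R : Type*} [CommSemiring R] [CharP R 2] (x : R) (n : ℕ) :
    ∑ i ∈ range (2 ^ n), x ^ i = (x + 1) ^ (2 ^ n - 1) := by
  induction n with
  | zero => simp
  | succ n ih =>
    calc ∑ i ∈ range (2 ^ (n + 1)), x ^ i
        = (x ^ 2 ^ n + 1) * ∑ i ∈ range (2 ^ n), x ^ i := by
          rw [pow_succ, mul_two, sum_range_add, add_mul, one_mul, mul_sum,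
            add_comm (∑ i ∈ range (2 ^ n), x ^ i)]
          simp only [pow_add]
      _ = (x + 1) ^ 2 ^ n * (x + 1) ^ (2 ^ n - 1) := by
          rw [ih, add_pow_char_pow, one_pow]
      _ = (x + 1) ^ (2 ^ (n + 1) - 1) := by
          rw [← pow_add]
          have : 1 ≤ 2 ^ n := Nat.one_le_two_pow
          congr 1
          omega

namespace Polynomial

variable {K : Type*} [Field K]

theorem monic_and_dvd_X_sub_C_pow_mul_X_sub_C_pow_iff {a b : K} {m k : ℕ} {d : K[X]} :
    d.Monic ∧ d ∣ (X - C a) ^ m * (X - C b) ^ k ↔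
      ∃ i ≤ m, ∃ j ≤ k, (X - C a) ^ i * (X - C b) ^ j = d := by
  constructor
  · rintro ⟨hd, hdvd⟩
    obtain ⟨u, v, hu, hv, rfl⟩ := exists_dvd_and_dvd_of_dvd_mul hdvd
    obtain ⟨i, hi, hui⟩ := (dvd_prime_pow (prime_X_sub_C a) m).mp hu
    obtain ⟨j, hj, hvj⟩ := (dvd_prime_pow (prime_X_sub_C b) k).mp hv
    exact ⟨i, hi, j, hj, eq_of_monic_of_associated
      (((monic_X_sub_C a).pow i).mul ((monic_X_sub_C b).pow j)) hd (hui.mul_mul hvj).symm⟩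
  · rintro ⟨i, hi, j, hj, rfl⟩
    exact ⟨((monic_X_sub_C a).pow i).mul ((monic_X_sub_C b).pow j),
      mul_dvd_mul (pow_dvd_pow _ hi) (pow_dvd_pow _ hj)⟩

theorem rootMultiplicity_X_sub_C_pow_mul_X_sub_C_pow {R : Type*} [CommRing R] [IsDomain R]
    {a b : R} (hab : a ≠ b) (i j : ℕ) :
    rootMultiplicity a ((X - C a) ^ i * (X - C b) ^ j) = i := by
  have hne : (X - C a) ^ i * (X - C b) ^ j ≠ 0 :=
    mul_ne_zero (pow_ne_zero _ (X_sub_C_ne_zero a)) (pow_ne_zero _ (X_sub_C_ne_zero b))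
  have hroot : ¬ ((X - C b) ^ j).IsRoot a := by
    simpa [IsRoot] using pow_ne_zero j (sub_ne_zero.mpr hab)
  rw [rootMultiplicity_mul hne, rootMultiplicity_X_sub_C_pow, rootMultiplicity_eq_zero hroot,
    add_zero]

theorem finsum_monic_dvd_X_sub_C_pow_mul_X_sub_C_pow {a b : K} (hab : a ≠ b) (m k : ℕ) :
    ∑ᶠ d ∈ {d : K[X] | d.Monic ∧ d ∣ (X - C a) ^ m * (X - C b) ^ k}, d =
      (∑ i ∈ range (m + 1), (X - C a) ^ i) * ∑ j ∈ range (k + 1), (X - C b) ^ j := by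
  classical
  set f : ℕ × ℕ → K[X] := fun p ↦ (X - C a) ^ p.1 * (X - C b) ^ p.2
  have hset : {d : K[X] | d.Monic ∧ d ∣ (X - C a) ^ m * (X - C b) ^ k} =
      ↑((range (m + 1) ×ˢ range (k + 1)).image f) := by
    ext d
    simp [f, monic_and_dvd_X_sub_C_pow_mul_X_sub_C_pow_iff, and_assoc]
  have hf : Set.InjOn f ↑(range (m + 1) ×ˢ range (k + 1)) := by
    rintro ⟨i, j⟩ - ⟨i', j'⟩ - h
    have hi := congrArg (rootMultiplicity a) h
    have hj := congrArg (rootMultiplicity b) ((mul_comm _ _).trans (h.trans (mul_comm _ _)))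
    simp only [f, rootMultiplicity_X_sub_C_pow_mul_X_sub_C_pow hab,
      rootMultiplicity_X_sub_C_pow_mul_X_sub_C_pow hab.symm] at hi hj
    rw [hi, hj]
  rw [hset, finsum_mem_coe_finset, sum_image hf, sum_product, sum_mul_sum]

end Polynomial

theorem trivial_perfect_general (n : ℕ) :
    sigma2 ((X : (ZMod 2)[X]) ^ (2 ^ n - 1) * (X + 1) ^ (2 ^ n - 1))
      = X ^ (2 ^ n - 1) * (X + 1) ^ (2 ^ n - 1) := by
  have hsum := finsum_monic_dvd_X_sub_C_pow_mul_X_sub_C_pow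
    (zero_ne_one : (0 : ZMod 2) ≠ 1) (2 ^ n - 1) (2 ^ n - 1)
  simp only [C_0, C_1, CharTwo.sub_eq_add, add_zero, Nat.sub_add_cancel Nat.one_le_two_pow]
    at hsum
  rw [sigma2, hsum, geom_sum_two_pow_eq_add_one_pow, geom_sum_two_pow_eq_add_one_pow, add_assoc,
    CharTwo.add_self_eq_zero, add_zero, mul_comm]

theorem trivial_perfect (n : ℕ) (hn : 1 ≤ n) :
    sigma2 ((X : (ZMod 2)[X]) ^ (2 ^ n - 1) * (X + 1) ^ (2 ^ n - 1))
      = X ^ (2 ^ n - 1) * (X + 1) ^ (2 ^ n - 1) :=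
  trivial_perfect_general n
end
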